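/- Fix N ≥ 2 and consider rational functions of the 2N complex variables (h_1, …, h_N, f_1, …, f_N), with the Poisson bracket {F, G} = Σ_{i=1}^N f_i (∂F/∂f_i · ∂G/∂h_i − ∂F/∂h_i · ∂G/∂f_i). Define λ_1 = Σ_{i=1}^N f_i, μ_1 = Σ_{i=1}^N h_i, and for a = 2, …, N: λ_a = −(Σ_{k=1}^{a−1} f_k)/f_a + (a−2) and μ_a = (λ_a − (a−2)) h_a + Σ_{k=1}^{a−1} h_k. Set φ_1 = −μ_1/λ_1 and φ_a = μ_a / ((λ_a − (a−2))(λ_a − (a−1))) for a = 2, …, N. Then on the open set where all f_i ≠ 0, λ_1 ≠ 0 and λ_a ∉ {a−2, a−1} for a = 2,…,N, the 2N functions (λ_1, …, λ_N, φ_1, …, φ_N) are canonical: {λ_i, λ_j} = 0, {φ_i, φ_j} = 0, and {φ_i, λ_j} = δ_{ij} for all i, j. -/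

import Mathlib

/-- The Poisson bracket `{F, G} = Σ_i f_i (∂F/∂f_i ∂G/∂h_i − ∂F/∂h_i ∂G/∂f_i)` on
functions of `(h_1, …, h_N, f_1, …, f_N)`; the first component of a point is `h`, the
second is `f`. -/
noncomputable def pb {N : ℕ} (F G : ((Fin N → ℂ) × (Fin N → ℂ)) → ℂ)
    (x : (Fin N → ℂ) × (Fin N → ℂ)) : ℂ :=
  ∑ i, x.2 i *
    (fderiv ℂ F x (0, Pi.single i 1) * fderiv ℂ G x (Pi.single i 1, 0)
      - fderiv ℂ F x (Pi.single i 1, 0) * fderiv ℂ G x (0, Pi.single i 1))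

/-- The Nijenhuis coordinate `λ_a`: `λ_1 = Σ_i f_i` and, for `a = 2, …, N`,
`λ_a = −(Σ_{k=1}^{a−1} f_k)/f_a + (a−2)`. Here the index `a : Fin N` corresponds to the
paper's index `a + 1 ∈ {1, …, N}`. -/
noncomputable def lamF {N : ℕ} (a : Fin N) (x : (Fin N → ℂ) × (Fin N → ℂ)) : ℂ :=
  if (a : ℕ) = 0 then ∑ i, x.2 i
  else -(∑ k ∈ Finset.univ.filter (fun k => k < a), x.2 k) / x.2 a + (((a : ℕ) : ℂ) - 1)

/-- The Nijenhuis coordinate `μ_a`: `μ_1 = Σ_i h_i` and, for `a = 2, …, N`,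
`μ_a = (λ_a − (a−2)) h_a + Σ_{k=1}^{a−1} h_k`. -/
noncomputable def muF {N : ℕ} (a : Fin N) (x : (Fin N → ℂ) × (Fin N → ℂ)) : ℂ :=
  if (a : ℕ) = 0 then ∑ i, x.1 i
  else (lamF a x - (((a : ℕ) : ℂ) - 1)) * x.1 a +
    ∑ k ∈ Finset.univ.filter (fun k => k < a), x.1 k

/-- The conjugate Darboux–Nijenhuis coordinate `φ_a`: `φ_1 = −μ_1/λ_1` and, for
`a = 2, …, N`, `φ_a = μ_a / ((λ_a − (a−2))(λ_a − (a−1)))`. -/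
noncomputable def phiF {N : ℕ} (a : Fin N) (x : (Fin N → ℂ) × (Fin N → ℂ)) : ℂ :=
  if (a : ℕ) = 0 then -(muF a x) / lamF a x
  else muF a x / ((lamF a x - (((a : ℕ) : ℂ) - 1)) * (lamF a x - ((a : ℕ) : ℂ)))

section Aux
open Finset
variable {N : ℕ}

noncomputable def Lh (i : Fin N) : ((Fin N → ℂ) × (Fin N → ℂ)) →L[ℂ] ℂ :=
  (ContinuousLinearMap.proj i).comp (ContinuousLinearMap.fst ℂ (Fin N → ℂ) (Fin N → ℂ))
noncomputable def Lf (i : Fin N) : ((Fin N → ℂ) × (Fin N → ℂ)) →L[ℂ] ℂ :=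
  (ContinuousLinearMap.proj i).comp (ContinuousLinearMap.snd ℂ (Fin N → ℂ) (Fin N → ℂ))

@[simp] lemma Lh_apply (i : Fin N) (v : (Fin N → ℂ) × (Fin N → ℂ)) : Lh i v = v.1 i := rfl
@[simp] lemma Lf_apply (i : Fin N) (v : (Fin N → ℂ) × (Fin N → ℂ)) : Lf i v = v.2 i := rfl

lemma hasF_h (i : Fin N) (x : (Fin N → ℂ) × (Fin N → ℂ)) :
    HasFDerivAt (fun y : (Fin N → ℂ) × (Fin N → ℂ) => y.1 i) (Lh i) x := (Lh i).hasFDerivAt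
lemma hasF_f (i : Fin N) (x : (Fin N → ℂ) × (Fin N → ℂ)) :
    HasFDerivAt (fun y : (Fin N → ℂ) × (Fin N → ℂ) => y.2 i) (Lf i) x := (Lf i).hasFDerivAt

noncomputable def SF (x : (Fin N → ℂ) × (Fin N → ℂ)) (a : Fin N) : ℂ :=
  ∑ k ∈ Finset.univ.filter (fun k => k < a), x.2 k

noncomputable def dlam (x : (Fin N → ℂ) × (Fin N → ℂ)) (a i : Fin N) : ℂ :=
  if (a : ℕ) = 0 then 1
  else if i < a then -(x.2 a)⁻¹ else if i = a then SF x a / (x.2 a)^2 else 0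

lemma lam_deriv (x : (Fin N → ℂ) × (Fin N → ℂ)) (a : Fin N) (hfa : x.2 a ≠ 0) :
    ∃ L : ((Fin N → ℂ) × (Fin N → ℂ)) →L[ℂ] ℂ, HasFDerivAt (lamF a) L x ∧
      (∀ i, L (Pi.single i 1, 0) = 0) ∧ (∀ i, L (0, Pi.single i 1) = dlam x a i) := by
  by_cases ha : (a : ℕ) = 0
  · refine ⟨∑ k, Lf k, ?_, ?_, ?_⟩
    · have heq : lamF a = fun y : (Fin N → ℂ) × (Fin N → ℂ) => ∑ k, y.2 k := by
        funext y; simp [lamF, ha]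
      rw [heq]
      exact HasFDerivAt.fun_sum fun k _ => hasF_f k x
    · intro i; simp
    · intro i; simp [Finset.sum_pi_single', dlam, ha]
  · set s : Finset (Fin N) := Finset.univ.filter (fun k => k < a) with hs
    have hS : HasFDerivAt (fun y : (Fin N → ℂ) × (Fin N → ℂ) => ∑ k ∈ s, y.2 k)
        (∑ k ∈ s, Lf k) x := HasFDerivAt.fun_sum fun k _ => hasF_f k x
    have hinv : HasFDerivAt (fun y : (Fin N → ℂ) × (Fin N → ℂ) => (y.2 a)⁻¹)
        ((-(x.2 a ^ 2)⁻¹) • Lf a) x :=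
      (hasDerivAt_inv hfa).comp_hasFDerivAt x (hasF_f a x)
    have hmain := (hS.neg.mul hinv).add_const (((a : ℕ) : ℂ) - 1)
    have heq : lamF a = fun y : (Fin N → ℂ) × (Fin N → ℂ) =>
        (-∑ k ∈ s, y.2 k) * (y.2 a)⁻¹ + (((a : ℕ) : ℂ) - 1) := by
      funext y; simp [lamF, ha, div_eq_mul_inv, hs]
    refine ⟨_, by rw [heq]; exact hmain, ?_, ?_⟩
    · intro i; simp
    · intro i
      simp only [ContinuousLinearMap.add_apply, ContinuousLinearMap.smul_apply,
        ContinuousLinearMap.neg_apply, ContinuousLinearMap.coe_sum',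
        Finset.sum_apply, Lf_apply, smul_eq_mul, Pi.neg_apply, Pi.mul_apply, Pi.zero_apply,
        Finset.sum_const_zero]
      rw [Finset.sum_pi_single' i 1 s, Pi.single_apply, dlam, if_neg ha]
      by_cases hia : i < a
      · rw [if_pos (show i ∈ s by simp [hs, hia]),
          if_neg (show ¬ a = i from by rintro rfl; exact absurd hia (lt_irrefl _)),
          if_pos hia]
        ring
      · by_cases hie : i = a
        · subst hie
          rw [if_neg (show i ∉ s by simp [hs, hia]), if_pos rfl, if_neg hia, if_pos rfl,
            SF, ← hs]
          field_simp
          ring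
        · rw [if_neg (show i ∉ s by simp [hs, hia]),
            if_neg (show ¬ a = i from fun h => hie h.symm), if_neg hia, if_neg hie]
          ring

noncomputable def dmuh (x : (Fin N → ℂ) × (Fin N → ℂ)) (a i : Fin N) : ℂ :=
  if (a : ℕ) = 0 then 1
  else if i < a then 1 else if i = a then -(SF x a) / x.2 a else 0

noncomputable def dmuf (x : (Fin N → ℂ) × (Fin N → ℂ)) (a i : Fin N) : ℂ :=
  if (a : ℕ) = 0 then 0 else dlam x a i * x.1 a

lemma mu_deriv (x : (Fin N → ℂ) × (Fin N → ℂ)) (a : Fin N) (hfa : x.2 a ≠ 0) :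
    ∃ L : ((Fin N → ℂ) × (Fin N → ℂ)) →L[ℂ] ℂ, HasFDerivAt (muF a) L x ∧
      (∀ i, L (Pi.single i 1, 0) = dmuh x a i) ∧ (∀ i, L (0, Pi.single i 1) = dmuf x a i) := by
  by_cases ha : (a : ℕ) = 0
  · refine ⟨∑ k, Lh k, ?_, ?_, ?_⟩
    · have heq : muF a = fun y : (Fin N → ℂ) × (Fin N → ℂ) => ∑ k, y.1 k := by
        funext y; simp [muF, ha]
      rw [heq]
      exact HasFDerivAt.fun_sum fun k _ => hasF_h k x
    · intro i; simp [Finset.sum_pi_single', dmuh, ha]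
    · intro i; simp [dmuf, ha]
  · set s : Finset (Fin N) := Finset.univ.filter (fun k => k < a) with hs
    have hS : HasFDerivAt (fun y : (Fin N → ℂ) × (Fin N → ℂ) => ∑ k ∈ s, y.2 k)
        (∑ k ∈ s, Lf k) x := HasFDerivAt.fun_sum fun k _ => hasF_f k x
    have hinv : HasFDerivAt (fun y : (Fin N → ℂ) × (Fin N → ℂ) => (y.2 a)⁻¹)
        ((-(x.2 a ^ 2)⁻¹) • Lf a) x :=
      (hasDerivAt_inv hfa).comp_hasFDerivAt x (hasF_f a x)
    have hmain := ((hS.neg.mul hinv).mul (hasF_h a x)).add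
      (HasFDerivAt.fun_sum fun k (_ : k ∈ s) => hasF_h k x)
    have heq : muF a = fun y : (Fin N → ℂ) × (Fin N → ℂ) =>
        ((-∑ k ∈ s, y.2 k) * (y.2 a)⁻¹) * y.1 a + ∑ k ∈ s, y.1 k := by
      funext y; simp [muF, lamF, ha, div_eq_mul_inv, hs]
    refine ⟨_, by rw [heq]; exact hmain, ?_, ?_⟩
    · intro i
      simp only [ContinuousLinearMap.add_apply, ContinuousLinearMap.smul_apply,
        ContinuousLinearMap.neg_apply, ContinuousLinearMap.coe_sum',
        Finset.sum_apply, Lf_apply, Lh_apply, smul_eq_mul, Pi.neg_apply, Pi.mul_apply,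
        Pi.zero_apply, Finset.sum_const_zero]
      rw [Finset.sum_pi_single' i 1 s, Pi.single_apply, dmuh, if_neg ha]
      by_cases hia : i < a
      · rw [if_pos (show i ∈ s by simp [hs, hia]),
          if_neg (show ¬ a = i from by rintro rfl; exact absurd hia (lt_irrefl _)),
          if_pos hia]
        simp
      · by_cases hie : i = a
        · subst hie
          rw [if_neg (show i ∉ s by simp [hs, hia]), if_pos rfl, if_neg hia, if_pos rfl,
            SF, ← hs]
          field_simp
          ring
        · rw [if_neg (show i ∉ s by simp [hs, hia]),
            if_neg (show ¬ a = i from fun h => hie h.symm), if_neg hia, if_neg hie]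
          simp
    · intro i
      simp only [ContinuousLinearMap.add_apply, ContinuousLinearMap.smul_apply,
        ContinuousLinearMap.neg_apply, ContinuousLinearMap.coe_sum',
        Finset.sum_apply, Lf_apply, Lh_apply, smul_eq_mul, Pi.neg_apply, Pi.mul_apply,
        Pi.zero_apply, Finset.sum_const_zero]
      rw [Finset.sum_pi_single' i 1 s, Pi.single_apply, dmuf, if_neg ha, dlam, if_neg ha]
      by_cases hia : i < a
      · rw [if_pos (show i ∈ s by simp [hs, hia]),
          if_neg (show ¬ a = i from by rintro rfl; exact absurd hia (lt_irrefl _)),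
          if_pos hia]
        simp; ring
      · by_cases hie : i = a
        · subst hie
          rw [if_neg (show i ∉ s by simp [hs, hia]), if_pos rfl, if_neg hia, if_pos rfl,
            SF, ← hs]
          field_simp; ring
        · rw [if_neg (show i ∉ s by simp [hs, hia]),
            if_neg (show ¬ a = i from fun h => hie h.symm), if_neg hia, if_neg hie]
          simp

noncomputable def gA (x : (Fin N → ℂ) × (Fin N → ℂ)) (a : Fin N) : ℂ :=
  if (a : ℕ) = 0 then -(lamF a x)⁻¹
  else ((lamF a x - (((a : ℕ) : ℂ) - 1)) * (lamF a x - ((a : ℕ) : ℂ)))⁻¹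

lemma phi_deriv (x : (Fin N → ℂ) × (Fin N → ℂ)) (a : Fin N) (hfa : x.2 a ≠ 0)
    (h0 : (a : ℕ) = 0 → lamF a x ≠ 0)
    (h1 : (a : ℕ) ≠ 0 → lamF a x ≠ ((a : ℕ) : ℂ) - 1 ∧ lamF a x ≠ ((a : ℕ) : ℂ)) :
    ∃ (L : ((Fin N → ℂ) × (Fin N → ℂ)) →L[ℂ] ℂ) (C : ℂ), HasFDerivAt (phiF a) L x ∧
      (∀ i, L (Pi.single i 1, 0) = gA x a * dmuh x a i) ∧
      (∀ i, L (0, Pi.single i 1) = C * dlam x a i) := by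
  obtain ⟨Llam, hlam, hlamh, hlamf⟩ := lam_deriv x a hfa
  obtain ⟨Lmu, hmu, hmuh, hmuf⟩ := mu_deriv x a hfa
  by_cases ha : (a : ℕ) = 0
  · have hlx := h0 ha
    have hinv : HasFDerivAt (fun y : (Fin N → ℂ) × (Fin N → ℂ) => (lamF a y)⁻¹)
        ((-(lamF a x ^ 2)⁻¹) • Llam) x :=
      (hasDerivAt_inv hlx).comp_hasFDerivAt x hlam
    have hmain := hmu.neg.mul hinv
    have heq : phiF a = fun y : (Fin N → ℂ) × (Fin N → ℂ) =>
        (-(muF a y)) * (lamF a y)⁻¹ := by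
      funext y; simp [phiF, ha, div_eq_mul_inv]
    refine ⟨_, muF a x * (lamF a x ^ 2)⁻¹, by rw [heq]; exact hmain, ?_, ?_⟩
    · intro i
      simp only [ContinuousLinearMap.add_apply, ContinuousLinearMap.smul_apply,
        ContinuousLinearMap.neg_apply, smul_eq_mul]
      rw [hlamh, hmuh, gA, if_pos ha]
      ring
    · intro i
      simp only [ContinuousLinearMap.add_apply, ContinuousLinearMap.smul_apply,
        ContinuousLinearMap.neg_apply, smul_eq_mul, Pi.neg_apply]
      rw [hlamf, hmuf, dmuf, if_pos ha]
      ring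
  · obtain ⟨hd1, hd2⟩ := h1 ha
    have hden : (lamF a x - (((a : ℕ) : ℂ) - 1)) * (lamF a x - ((a : ℕ) : ℂ)) ≠ 0 :=
      mul_ne_zero (sub_ne_zero.mpr hd1) (sub_ne_zero.mpr hd2)
    have hdenF : HasFDerivAt (fun y : (Fin N → ℂ) × (Fin N → ℂ) =>
        (lamF a y - (((a : ℕ) : ℂ) - 1)) * (lamF a y - ((a : ℕ) : ℂ)))
        ((lamF a x - (((a : ℕ) : ℂ) - 1)) • Llam + (lamF a x - ((a : ℕ) : ℂ)) • Llam) x :=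
      (hlam.sub_const _).mul (hlam.sub_const _)
    have hinv : HasFDerivAt (fun y : (Fin N → ℂ) × (Fin N → ℂ) =>
        ((lamF a y - (((a : ℕ) : ℂ) - 1)) * (lamF a y - ((a : ℕ) : ℂ)))⁻¹)
        ((-(((lamF a x - (((a : ℕ) : ℂ) - 1)) * (lamF a x - ((a : ℕ) : ℂ))) ^ 2)⁻¹) •
          ((lamF a x - (((a : ℕ) : ℂ) - 1)) • Llam + (lamF a x - ((a : ℕ) : ℂ)) • Llam)) x :=
      (hasDerivAt_inv hden).comp_hasFDerivAt x hdenF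
    have hmain := hmu.mul hinv
    have heq : phiF a = fun y : (Fin N → ℂ) × (Fin N → ℂ) =>
        muF a y * ((lamF a y - (((a : ℕ) : ℂ) - 1)) * (lamF a y - ((a : ℕ) : ℂ)))⁻¹ := by
      funext y; simp [phiF, ha, div_eq_mul_inv]
    refine ⟨_, muF a x * (-(((lamF a x - (((a : ℕ) : ℂ) - 1)) * (lamF a x - ((a : ℕ) : ℂ))) ^ 2)⁻¹ *
        ((lamF a x - (((a : ℕ) : ℂ) - 1)) + (lamF a x - ((a : ℕ) : ℂ)))) +
        ((lamF a x - (((a : ℕ) : ℂ) - 1)) * (lamF a x - ((a : ℕ) : ℂ)))⁻¹ * x.1 a,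
      by rw [heq]; exact hmain, ?_, ?_⟩
    · intro i
      simp only [ContinuousLinearMap.add_apply, ContinuousLinearMap.smul_apply,
        ContinuousLinearMap.neg_apply, smul_eq_mul]
      rw [hlamh, hmuh, gA, if_neg ha]
      ring
    · intro i
      simp only [ContinuousLinearMap.add_apply, ContinuousLinearMap.smul_apply,
        ContinuousLinearMap.neg_apply, smul_eq_mul]
      rw [hlamf, hmuf, dmuf, if_neg ha]
      ring

noncomputable def EE (x : (Fin N → ℂ) × (Fin N → ℂ)) (a : Fin N) : ℂ :=
  if (a : ℕ) = 0 then lamF a x else -(SF x a * (SF x a + x.2 a)) / (x.2 a)^2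

lemma gE (x : (Fin N → ℂ) × (Fin N → ℂ)) (a : Fin N) (hfa : x.2 a ≠ 0)
    (h0 : (a : ℕ) = 0 → lamF a x ≠ 0)
    (h1 : (a : ℕ) ≠ 0 → lamF a x ≠ ((a : ℕ) : ℂ) - 1 ∧ lamF a x ≠ ((a : ℕ) : ℂ)) :
    gA x a * EE x a = -1 := by
  by_cases ha : (a : ℕ) = 0
  · rw [gA, if_pos ha, EE, if_pos ha]
    field_simp [h0 ha]
  · obtain ⟨hd1, hd2⟩ := h1 ha
    have hl : lamF a x = -(SF x a) / x.2 a + (((a : ℕ) : ℂ) - 1) := by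
      rw [lamF, if_neg ha, SF]
    have hS : SF x a ≠ 0 := by
      intro h; apply hd1; rw [hl, h]; simp
    have hT : SF x a + x.2 a ≠ 0 := by
      intro h; apply hd2
      have hS' : SF x a = -x.2 a := by linear_combination h
      rw [hl, hS']
      field_simp
      ring
    rw [gA, if_neg ha, EE, if_neg ha, hl]
    field_simp
    rw [neg_eq_iff_eq_neg, neg_neg, div_eq_one_iff_eq (by
      intro h; apply mul_ne_zero hS hT; linear_combination h)]
    ring

lemma sum_lt (x : (Fin N → ℂ) × (Fin N → ℂ)) (a : Fin N) :
    ∑ m, (if m < a then x.2 m else 0) = SF x a := by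
  rw [SF, Finset.sum_filter]

lemma sum_eq' (j : Fin N) (c : ℂ) (g : Fin N → ℂ) :
    ∑ m, (if m = j then c * g m else 0) = c * g j := by
  simp

lemma sum1 (x : (Fin N → ℂ) × (Fin N → ℂ)) (hx : ∀ i, x.2 i ≠ 0) (a j : Fin N) :
    ∑ m, x.2 m * (dmuh x a m * dlam x j m) = if a = j then EE x a else 0 := by
  by_cases ha : (a : ℕ) = 0 <;> by_cases hj : (j : ℕ) = 0
  · have haj : a = j := Fin.ext (ha.trans hj.symm)
    subst haj
    simp [dmuh, dlam, ha, EE, lamF]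
  · have hne : a ≠ j := fun h => hj (h ▸ ha)
    rw [if_neg hne]
    have hpt : ∀ m : Fin N, x.2 m * (dmuh x a m * dlam x j m)
        = (if m < j then x.2 m else 0) * (-(x.2 j)⁻¹)
          + (if m = j then SF x j / (x.2 j)^2 * x.2 m else 0) := by
      intro m
      rw [dmuh, if_pos ha, dlam, if_neg hj]
      by_cases h1 : m < j
      · rw [if_pos h1, if_pos h1, if_neg (ne_of_lt h1)]; ring
      · by_cases h2 : m = j
        · rw [if_neg h1, if_pos h2, if_neg h1, if_pos h2]; ring
        · rw [if_neg h1, if_neg h2, if_neg h1, if_neg h2]; ring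
    rw [Finset.sum_congr rfl (fun m _ => hpt m), Finset.sum_add_distrib,
      ← Finset.sum_mul, sum_lt, sum_eq']
    field_simp [hx j]
    ring
  · have hne : a ≠ j := fun h => ha (h ▸ hj)
    rw [if_neg hne]
    have hpt : ∀ m : Fin N, x.2 m * (dmuh x a m * dlam x j m)
        = (if m < a then x.2 m else 0) * 1
          + (if m = a then -(SF x a) / x.2 a * x.2 m else 0) := by
      intro m
      rw [dmuh, if_neg ha, dlam, if_pos hj]
      by_cases h1 : m < a
      · rw [if_pos h1, if_pos h1, if_neg (ne_of_lt h1)]; ring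
      · by_cases h2 : m = a
        · rw [if_neg h1, if_pos h2, if_neg h1, if_pos h2]; ring
        · rw [if_neg h1, if_neg h2, if_neg h1, if_neg h2]; ring
    rw [Finset.sum_congr rfl (fun m _ => hpt m), Finset.sum_add_distrib,
      ← Finset.sum_mul, sum_lt, sum_eq']
    field_simp [hx a]
    ring
  · rcases lt_trichotomy a j with hlt | heq | hgt
    · rw [if_neg (ne_of_lt hlt)]
      have hpt : ∀ m : Fin N, x.2 m * (dmuh x a m * dlam x j m)
          = (if m < a then x.2 m else 0) * (-(x.2 j)⁻¹)
            + (if m = a then -(SF x a) / x.2 a * (-(x.2 j)⁻¹) * x.2 m else 0) := by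
        intro m
        rw [dmuh, if_neg ha, dlam, if_neg hj]
        by_cases h1 : m < a
        · have h1j : m < j := lt_trans h1 hlt
          rw [if_pos h1, if_pos h1, if_neg (ne_of_lt h1), if_pos h1j]; ring
        · by_cases h2 : m = a
          · subst h2
            rw [if_neg h1, if_pos rfl, if_neg h1, if_pos rfl, if_pos hlt]; ring
          · rw [if_neg h1, if_neg h2, if_neg h1, if_neg h2]; ring
      rw [Finset.sum_congr rfl (fun m _ => hpt m), Finset.sum_add_distrib,
        ← Finset.sum_mul, sum_lt, sum_eq']
      field_simp [hx a, hx j]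
      ring
    · subst heq
      rw [if_pos rfl, EE, if_neg ha]
      have hpt : ∀ m : Fin N, x.2 m * (dmuh x a m * dlam x a m)
          = (if m < a then x.2 m else 0) * (-(x.2 a)⁻¹)
            + (if m = a then -(SF x a) / x.2 a * (SF x a / (x.2 a)^2) * x.2 m else 0) := by
        intro m
        rw [dmuh, if_neg ha, dlam, if_neg ha]
        by_cases h1 : m < a
        · rw [if_pos h1, if_pos h1, if_pos h1, if_neg (ne_of_lt h1)]; ring
        · by_cases h2 : m = a
          · subst h2
            rw [if_neg h1, if_pos rfl, if_neg h1, if_pos rfl, if_neg h1, if_pos rfl]; ring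
          · rw [if_neg h1, if_neg h2, if_neg h1, if_neg h2, if_neg h1, if_neg h2]; ring
      rw [Finset.sum_congr rfl (fun m _ => hpt m), Finset.sum_add_distrib,
        ← Finset.sum_mul, sum_lt, sum_eq']
      field_simp [hx a]
      ring
    · rw [if_neg (ne_of_gt hgt)]
      have hpt : ∀ m : Fin N, x.2 m * (dmuh x a m * dlam x j m)
          = (if m < j then x.2 m else 0) * (-(x.2 j)⁻¹)
            + (if m = j then SF x j / (x.2 j)^2 * x.2 m else 0) := by
        intro m
        rw [dmuh, if_neg ha, dlam, if_neg hj]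
        by_cases h1 : m < j
        · have h1a : m < a := lt_trans h1 hgt
          rw [if_pos h1a, if_pos h1, if_pos h1, if_neg (ne_of_lt h1)]; ring
        · by_cases h2 : m = j
          · subst h2
            rw [if_pos hgt, if_neg h1, if_pos rfl, if_neg h1, if_pos rfl]; ring
          · rw [if_neg h1, if_neg h2, if_neg h1, if_neg h2]
            by_cases h3 : m < a
            · rw [if_pos h3]; ring
            · rw [if_neg h3]
              by_cases h4 : m = a
              · rw [if_pos h4]; ring
              · rw [if_neg h4]; ring
      rw [Finset.sum_congr rfl (fun m _ => hpt m), Finset.sum_add_distrib,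
        ← Finset.sum_mul, sum_lt, sum_eq']
      field_simp [hx j]
      ring
end Aux

/-- On the open set where all `f_i ≠ 0`, `λ_1 ≠ 0` and `λ_a ∉ {a−2, a−1}` for
`a = 2, …, N`, the `2N` functions `(λ_1, …, λ_N, φ_1, …, φ_N)` are canonical:
`{λ_i, λ_j} = 0`, `{φ_i, φ_j} = 0`, and `{φ_i, λ_j} = δ_{ij}`. -/
theorem stmt18 (N : ℕ) (hN : 2 ≤ N) (x : (Fin N → ℂ) × (Fin N → ℂ))
    (hx : ∀ i, x.2 i ≠ 0)
    (hlam1 : lamF (⟨0, by omega⟩ : Fin N) x ≠ 0)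
    (hlama : ∀ a : Fin N, (a : ℕ) ≠ 0 →
      lamF a x ≠ ((a : ℕ) : ℂ) - 1 ∧ lamF a x ≠ ((a : ℕ) : ℂ)) :
    ∀ i j : Fin N,
      pb (lamF i) (lamF j) x = 0 ∧ pb (phiF i) (phiF j) x = 0 ∧
        pb (phiF i) (lamF j) x = (if i = j then 1 else 0) := by
  have h0 : ∀ a : Fin N, (a : ℕ) = 0 → lamF a x ≠ 0 := by
    intro a ha
    have e : a = (⟨0, by omega⟩ : Fin N) := Fin.ext (by simpa using ha)
    rw [e]; exact hlam1
  intro i j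
  obtain ⟨Li, hLi, hLih, hLif⟩ := lam_deriv x i (hx i)
  obtain ⟨Lj, hLj, hLjh, hLjf⟩ := lam_deriv x j (hx j)
  obtain ⟨Pi_, Ci, hPi, hPih, hPif⟩ := phi_deriv x i (hx i) (h0 i) (hlama i)
  obtain ⟨Pj, Cj, hPj, hPjh, hPjf⟩ := phi_deriv x j (hx j) (h0 j) (hlama j)
  refine ⟨?_, ?_, ?_⟩
  · rw [pb, hLi.fderiv, hLj.fderiv]
    apply Finset.sum_eq_zero
    intro m _
    rw [hLih m, hLjh m, hLif m, hLjf m]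
    ring
  · by_cases hij : i = j
    · subst hij
      rw [pb]
      apply Finset.sum_eq_zero
      intro m _
      ring
    rw [pb, hPi.fderiv, hPj.fderiv]
    have hpt : ∀ m : Fin N, x.2 m * (Pi_ (0, Pi.single m 1) * Pj (Pi.single m 1, 0)
        - Pi_ (Pi.single m 1, 0) * Pj (0, Pi.single m 1))
        = (Ci * gA x j) * (x.2 m * (dmuh x j m * dlam x i m))
          - (gA x i * Cj) * (x.2 m * (dmuh x i m * dlam x j m)) := by
      intro m
      rw [hPih m, hPjh m, hPif m, hPjf m]
      ring
    rw [Finset.sum_congr rfl (fun m _ => hpt m), Finset.sum_sub_distrib,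
      ← Finset.mul_sum, ← Finset.mul_sum, sum1 x hx j i, sum1 x hx i j]
    rw [if_neg hij, if_neg (fun h => hij h.symm)]
    ring
  · rw [pb, hPi.fderiv, hLj.fderiv]
    have hpt : ∀ m : Fin N, x.2 m * (Pi_ (0, Pi.single m 1) * Lj (Pi.single m 1, 0)
        - Pi_ (Pi.single m 1, 0) * Lj (0, Pi.single m 1))
        = (-(gA x i)) * (x.2 m * (dmuh x i m * dlam x j m)) := by
      intro m
      rw [hPih m, hPif m, hLjh m, hLjf m]
      ring
    rw [Finset.sum_congr rfl (fun m _ => hpt m), ← Finset.mul_sum, sum1 x hx i j]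
    by_cases hij : i = j
    · subst hij
      rw [if_pos rfl, if_pos rfl]
      have := gE x i (hx i) (h0 i) (hlama i)
      linear_combination -this
    · rw [if_neg hij, if_neg hij]; ring
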